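/- Let α be a type, let f : α → α, and define the family of relations Q : ℕ → α → α → Prop by: Q 0 y z ↔ f y = z, and Q (s+1) y z ↔ ∃ v : α, ∀ a b : α, ((y = a ∧ v = b) ∨ (v = a ∧ b = z)) → Q s a b. Then for every s : ℕ and all y z : α, Q s y z holds if and only if f^[2^s] y = z (the 2^s-fold iterate of f applied to y equals z). -/

import Mathlib

/-! The universally quantified pair `(a, b)` ranges over exactly the two pairs `(y, v)` and
`(v, z)`, so the single occurrence of `Q s` in `Q (s+1) y z` asserts `Q s y v ∧ Q s v z`, i.e.
`Q (s+1) = Q s ∘ Q s`. Starting from the graph of `f`, `s` squarings give the graph of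
`f^[2^s]`. -/

/-- The family of relations from the modified Stockmeyer–Meyer construction:
`Q f 0 y z ↔ f y = z`, and `Q f (s+1) y z` uses one existential and two universal
quantifiers with equality constraints over a single occurrence of `Q f s`. -/
def stockmeyerMeyerQ {α : Type*} (f : α → α) : ℕ → α → α → Prop
  | 0, y, z => f y = z
  | s + 1, y, z =>
      ∃ v : α, ∀ a b : α, ((y = a ∧ v = b) ∨ (v = a ∧ b = z)) → stockmeyerMeyerQ f s a b

theorem stockmeyerMeyerQ_succ_iff {α : Type*} (f : α → α) (s : ℕ) (y z : α) :
    stockmeyerMeyerQ f (s + 1) y z ↔ ∃ v, stockmeyerMeyerQ f s y v ∧ stockmeyerMeyerQ f s v z := by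
  refine exists_congr fun v => ⟨fun h => ⟨h y v (.inl ⟨rfl, rfl⟩), h v z (.inr ⟨rfl, rfl⟩)⟩, ?_⟩
  rintro ⟨hyv, hvz⟩ a b (⟨rfl, rfl⟩ | ⟨rfl, rfl⟩)
  exacts [hyv, hvz]

theorem stockmeyerMeyerQ_iff_iterate {α : Type*} (f : α → α) (s : ℕ) (y z : α) :
    stockmeyerMeyerQ f s y z ↔ f^[2 ^ s] y = z := by
  induction s generalizing y z with
  | zero => rfl
  | succ s ih =>
    simp only [stockmeyerMeyerQ_succ_iff, ih, exists_eq_left', pow_succ, mul_two,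
      Function.iterate_add_apply]
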